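/- arXiv:2404.14554 — 3 statements merged into one kernel-verified Lean document; each statement's English description precedes it below -/
import Mathlib

section
/- There exists a constant σ ∈ (0,1), depending only on C, such that for every integer p ≥ 1 and every matrix u ∈ ℝ^{n×p} (rows u_i ∈ ℝ^p), ‖Cu − π(𝟏ᵀu)‖_{π^{-1}} ≤ σ·‖u − π(𝟏ᵀu)‖_{π^{-1}}, where π(𝟏ᵀu) denotes the rank-one matrix whose i-th row is π_i·Σ_{j=1}^n u_j. -/
/-!
Write `r = v / π`. Column-stochasticity and `C π = π` give the identity
`‖v‖²_{π⁻¹} - ‖C v‖²_{π⁻¹} = ∑ᵢ ∑ⱼ Cᵢⱼ πⱼ (rⱼ - (C v)ᵢ / πᵢ)²`.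
If the right side vanishes, the positive diagonal forces `rⱼ = rᵢ` whenever `Cᵢⱼ > 0`, so by
irreducibility `r` is constant, and a zero-sum `v` is zero. Hence `C` strictly shrinks the weighted
norm on the zero-sum hyperplane, and by compactness of its unit sphere it does so by a uniform
factor `σ < 1`. The vector-valued inequality is the sum over coordinates of the scalar one, so `σ`
does not depend on `p`.
-/

open Finset Matrix Metric

theorem exists_lt_one_forall_le_mul_of_lt {E : Type*} [NormedAddCommGroup E] [NormedSpace ℝ E]
    [FiniteDimensional ℝ E] {f g : E → ℝ} (hf : Continuous f) (hg : Continuous g)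
    (hf_smul : ∀ (c : ℝ) x, f (c • x) = c ^ 2 * f x) (hg_smul : ∀ (c : ℝ) x, g (c • x) = c ^ 2 * g x)
    (hf_nonneg : ∀ x, 0 ≤ f x) (hlt : ∀ x ≠ 0, f x < g x) :
    ∃ μ, 0 < μ ∧ μ < 1 ∧ ∀ x, f x ≤ μ * g x := by
  suffices h : ∃ μ, 0 < μ ∧ μ < 1 ∧ ∀ y ∈ sphere (0 : E) 1, f y ≤ μ * g y by
    obtain ⟨μ, hμ0, hμ1, hμ⟩ := h
    refine ⟨μ, hμ0, hμ1, fun x => ?_⟩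
    rcases eq_or_ne x 0 with rfl | hx
    · have h0 : f 0 = 0 ∧ g 0 = 0 := by simpa using And.intro (hf_smul 0 0) (hg_smul 0 0)
      simp [h0]
    have hy : ‖x‖⁻¹ • x ∈ sphere (0 : E) 1 := by simp [norm_smul, hx]
    have hxy : x = ‖x‖ • ‖x‖⁻¹ • x := by simp [smul_smul, hx]
    rw [hxy, hf_smul, hg_smul, mul_left_comm]
    exact mul_le_mul_of_nonneg_left (hμ _ hy) (sq_nonneg _)
  rcases (sphere (0 : E) 1).eq_empty_or_nonempty with hS | hS
  · exact ⟨1 / 2, by norm_num, by norm_num, by simp [hS]⟩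
  have hg_pos : ∀ y ∈ sphere (0 : E) 1, 0 < g y := fun y hy =>
    (hf_nonneg y).trans_lt (hlt y (ne_zero_of_mem_unit_sphere ⟨y, hy⟩))
  obtain ⟨y₀, hy₀, hmax⟩ := (isCompact_sphere (0 : E) 1).exists_isMaxOn hS
    (hf.continuousOn.div hg.continuousOn fun y hy => (hg_pos y hy).ne')
  have hlt₀ : f y₀ / g y₀ < 1 :=
    (div_lt_one (hg_pos y₀ hy₀)).2 (hlt y₀ (ne_zero_of_mem_unit_sphere ⟨y₀, hy₀⟩))
  refine ⟨max (f y₀ / g y₀) (1 / 2), by positivity, max_lt hlt₀ (by norm_num), fun y hy => ?_⟩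
  calc f y = f y / g y * g y := (div_mul_cancel₀ _ (hg_pos y hy).ne').symm
    _ ≤ max (f y₀ / g y₀) (1 / 2) * g y :=
      mul_le_mul_of_nonneg_right ((hmax hy).trans (le_max_left _ _)) (hg_pos y hy).le

theorem Matrix.eq_of_pow_apply_pos {ι R α : Type*} [Fintype ι] [DecidableEq ι] [Ring R]
    [LinearOrder R] [IsStrictOrderedRing R] {A : Matrix ι ι R} (hA : ∀ i j, 0 ≤ A i j)
    {r : ι → α} (hr : ∀ i j, 0 < A i j → r j = r i) (k : ℕ) {i j : ι} (h : 0 < (A ^ k) i j) :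
    r j = r i := by
  induction k generalizing j with
  | zero =>
    rcases eq_or_ne i j with rfl | hij
    · rfl
    · simp [one_apply_ne hij] at h
  | succ m ih =>
    rw [pow_succ, mul_apply] at h
    obtain ⟨l, -, hl⟩ := (sum_pos_iff_of_nonneg fun l _ =>
      mul_nonneg (pow_apply_nonneg hA m i l) (hA l j)).1 h
    have hl' := (pos_and_pos_or_neg_and_neg_of_mul_pos hl).resolve_right
      fun h => (hA l j).not_gt h.2
    exact (hr l j hl'.2).trans (ih hl'.1)

section WeightedNorm

variable {ι : Type*} [Fintype ι]

theorem sum_mul_norm_sq_eq_sum_sum {κ : Type*} [Fintype κ] (w : ι → ℝ)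
    (x : ι → EuclideanSpace ℝ κ) : ∑ i, w i * ‖x i‖ ^ 2 = ∑ t, ∑ i, w i * x i t ^ 2 := by
  simp_rw [EuclideanSpace.real_norm_sq_eq, mul_sum]
  exact sum_comm

theorem sum_inv_mul_sq_sub_sum_inv_mul_mulVec_sq {C : Matrix ι ι ℝ} {π : ι → ℝ}
    (hC_col : ∀ j, ∑ i, C i j = 1) (hπ_ne : ∀ i, π i ≠ 0) (hπ : C *ᵥ π = π) (v : ι → ℝ) :
    ∑ i, (π i)⁻¹ * v i ^ 2 - ∑ i, (π i)⁻¹ * (C *ᵥ v) i ^ 2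
      = ∑ i, ∑ j, C i j * π j * (v j / π j - (C *ᵥ v) i / π i) ^ 2 := by
  have hrow (i : ι) : ∑ j, C i j * π j * (v j / π j - (C *ᵥ v) i / π i) ^ 2
      = ∑ j, C i j * ((π j)⁻¹ * v j ^ 2) - (π i)⁻¹ * (C *ᵥ v) i ^ 2 := by
    have hterm (j : ι) : C i j * π j * (v j / π j - (C *ᵥ v) i / π i) ^ 2
        = C i j * ((π j)⁻¹ * v j ^ 2) - 2 * ((C *ᵥ v) i / π i) * (C i j * v j)
          + ((C *ᵥ v) i / π i) ^ 2 * (C i j * π j) := by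
      field_simp [hπ_ne j]
      ring
    have hπi : ∑ j, C i j * π j = π i := congrFun hπ i
    have hvi : ∑ j, C i j * v j = (C *ᵥ v) i := rfl
    simp_rw [hterm, sum_add_distrib, sum_sub_distrib, ← mul_sum, hπi, hvi]
    field_simp [hπ_ne i]
    ring
  simp_rw [hrow, sum_sub_distrib, sum_comm (γ := ι) (f := fun i j => C i j * _), ← sum_mul,
    hC_col, one_mul]

variable [DecidableEq ι]

theorem sum_inv_mul_mulVec_sq_lt {C : Matrix ι ι ℝ} {π : ι → ℝ}
    (hC_nonneg : ∀ i j, 0 ≤ C i j) (hC_col : ∀ j, ∑ i, C i j = 1) (hC_diag : ∀ i, 0 < C i i)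
    (hC_irr : ∀ i j, ∃ k : ℕ, 0 < (C ^ k) i j) (hπ_pos : ∀ i, 0 < π i) (hπ : C *ᵥ π = π)
    {v : ι → ℝ} (hv_sum : ∑ i, v i = 0) (hv : v ≠ 0) :
    ∑ i, (π i)⁻¹ * (C *ᵥ v) i ^ 2 < ∑ i, (π i)⁻¹ * v i ^ 2 := by
  have hterm_nonneg (i j : ι) : 0 ≤ C i j * π j * (v j / π j - (C *ᵥ v) i / π i) ^ 2 := by
    have := hC_nonneg i j; have := hπ_pos j; positivity
  have hid := sum_inv_mul_sq_sub_sum_inv_mul_mulVec_sq hC_col (fun i => (hπ_pos i).ne') hπ v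
  by_contra hle
  have hzero : ∑ i, ∑ j, C i j * π j * (v j / π j - (C *ᵥ v) i / π i) ^ 2 = 0 :=
    le_antisymm (by linarith) (sum_nonneg fun i _ => sum_nonneg fun j _ => hterm_nonneg i j)
  have hrow (i j : ι) (hij : 0 < C i j) : v j / π j = (C *ᵥ v) i / π i := by
    have h := (sum_eq_zero_iff_of_nonneg fun j _ => hterm_nonneg i j).1
      ((sum_eq_zero_iff_of_nonneg fun i _ => sum_nonneg fun j _ => hterm_nonneg i j).1 hzero i
        (mem_univ i)) j (mem_univ j)
    rw [mul_eq_zero, or_iff_right (mul_pos hij (hπ_pos j)).ne', sq_eq_zero_iff, sub_eq_zero] at h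
    exact h
  have hconst (i j : ι) : v j / π j = v i / π i := by
    obtain ⟨k, hk⟩ := hC_irr i j
    exact eq_of_pow_apply_pos hC_nonneg
      (fun i j hij => (hrow i j hij).trans (hrow i i (hC_diag i)).symm) k hk
  refine hv (funext fun j => ?_)
  have hv_eq (i : ι) : v i = v j / π j * π i := by
    rw [← hconst j i, div_mul_cancel₀ _ (hπ_pos i).ne']
  have hsum_pos : 0 < ∑ i, π i := sum_pos (fun i _ => hπ_pos i) ⟨j, mem_univ j⟩
  have hv_sum' : v j / π j * ∑ i, π i = 0 := by
    rw [mul_sum, ← hv_sum]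
    exact sum_congr rfl fun i _ => (hv_eq i).symm
  simpa [hsum_pos.ne', (hπ_pos j).ne'] using hv_sum'

theorem exists_lt_one_sum_inv_mul_mulVec_sq_le {C : Matrix ι ι ℝ} {π : ι → ℝ}
    (hC_nonneg : ∀ i j, 0 ≤ C i j) (hC_col : ∀ j, ∑ i, C i j = 1) (hC_diag : ∀ i, 0 < C i i)
    (hC_irr : ∀ i j, ∃ k : ℕ, 0 < (C ^ k) i j) (hπ_pos : ∀ i, 0 < π i) (hπ : C *ᵥ π = π) :
    ∃ μ, 0 < μ ∧ μ < 1 ∧ ∀ v : ι → ℝ, ∑ i, v i = 0 →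
      ∑ i, (π i)⁻¹ * (C *ᵥ v) i ^ 2 ≤ μ * ∑ i, (π i)⁻¹ * v i ^ 2 := by
  let K : Submodule ℝ (ι → ℝ) := LinearMap.ker (∑ i, LinearMap.proj i)
  have hK (v : ι → ℝ) : v ∈ K ↔ ∑ i, v i = 0 := by simp [K]
  let Q : (ι → ℝ) → ℝ := fun v => ∑ i, (π i)⁻¹ * v i ^ 2
  have hQ_smul (c : ℝ) (v : ι → ℝ) : Q (c • v) = c ^ 2 * Q v := by
    simp only [Q, mul_sum, Pi.smul_apply, smul_eq_mul]
    exact sum_congr rfl fun i _ => by ring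
  obtain ⟨μ, hμ0, hμ1, hμ⟩ := exists_lt_one_forall_le_mul_of_lt (E := K)
    (f := fun v => Q (C *ᵥ v)) (g := fun v => Q v) (by fun_prop) (by fun_prop)
    (fun c v => by simp [mulVec_smul, hQ_smul]) (fun c v => by simp [hQ_smul])
    (fun v => sum_nonneg fun i _ => by have := hπ_pos i; positivity)
    (fun v hv => sum_inv_mul_mulVec_sq_lt hC_nonneg hC_col hC_diag hC_irr hπ_pos hπ
      ((hK v).1 v.2) (by simpa using hv))
  exact ⟨μ, hμ0, hμ1, fun v hv => hμ ⟨v, (hK v).2 hv⟩⟩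

end WeightedNorm

/-- Contraction of a column-stochastic, irreducible matrix with positive
diagonal in the `π⁻¹`-weighted norm: there is `σ ∈ (0,1)` (depending only on `C`) such
that for every `p ≥ 1` and every `u ∈ ℝ^{n×p}`,
`‖Cu − π(𝟏ᵀu)‖_{π⁻¹} ≤ σ ‖u − π(𝟏ᵀu)‖_{π⁻¹}`. -/
theorem column_stochastic_contraction
    (n : ℕ)
    (C : Matrix (Fin n) (Fin n) ℝ)
    (hCnonneg : ∀ i j, 0 ≤ C i j)
    (hCcol : ∀ j, ∑ i, C i j = 1)
    (hCdiag : ∀ i, 0 < C i i)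
    (hCirr : ∀ i j, ∃ k : ℕ, 1 ≤ k ∧ 0 < (C ^ k) i j)
    (π : Fin n → ℝ)
    (hπpos : ∀ i, 0 < π i)
    (hπ : C.mulVec π = π)
    (hπsum : ∑ i, π i = 1) :
    ∃ σ : ℝ, 0 < σ ∧ σ < 1 ∧
      ∀ p : ℕ, 1 ≤ p → ∀ u : Fin n → EuclideanSpace ℝ (Fin p),
        Real.sqrt (∑ i, (π i)⁻¹ * ‖(∑ j, C i j • u j) - π i • (∑ j, u j)‖ ^ 2)
          ≤ σ * Real.sqrt (∑ i, (π i)⁻¹ * ‖u i - π i • (∑ j, u j)‖ ^ 2) := by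
  obtain ⟨μ, hμ0, hμ1, hμ⟩ := exists_lt_one_sum_inv_mul_mulVec_sq_le hCnonneg hCcol hCdiag
    (fun i j => (hCirr i j).imp fun _ => And.right) hπpos hπ
  refine ⟨√μ, Real.sqrt_pos.2 hμ0, by simpa using Real.sqrt_lt_sqrt hμ0.le hμ1, fun p _ u => ?_⟩
  let v (t : Fin p) : Fin n → ℝ := (fun i => u i t) - (∑ j, u j) t • π
  have hv_sum (t : Fin p) : ∑ i, v t i = 0 := by
    simp [v, sum_sub_distrib, ← mul_sum, hπsum]
  have hCv (t : Fin p) (i : Fin n) :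
      ((∑ j, C i j • u j) - π i • (∑ j, u j)) t = (C *ᵥ v t) i := by
    simp only [v, mulVec_sub, mulVec_smul, hπ]
    simp [mulVec, dotProduct, mul_comm]
  rw [← Real.sqrt_mul hμ0.le]
  refine Real.sqrt_le_sqrt ?_
  rw [sum_mul_norm_sq_eq_sum_sum, sum_mul_norm_sq_eq_sum_sum, mul_sum]
  exact sum_le_sum fun t _ => by simpa [hCv, v, mul_comm] using hμ (v t) (hv_sum t)
end

section
/- There exists a constant c ∈ (0,1), depending only on R, such that for every integer p ≥ 1, every u ∈ ℝ^{n×p} (rows u_i ∈ ℝ^p), and every a ∈ ℝ^p: ‖Ru − 𝟏aᵀ‖_φ² ≤ ‖u − 𝟏aᵀ‖_φ² − c²·‖u − 𝟏(φᵀu)‖_φ², where 𝟏aᵀ is the matrix all of whose rows equal a and 𝟏(φᵀu) is the matrix all of whose rows equal Σ_{i=1}^n φ_i u_i. In particular, taking a = φᵀu, one gets ‖Ru − 𝟏(φᵀu)‖_φ ≤ √(1 − c²)·‖u − 𝟏(φᵀu)‖_φ with √(1 − c²) ∈ (0,1). -/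
/-!
Put `D(u) = ½ ∑ᵢ φᵢ ∑ⱼₖ Rᵢⱼ Rᵢₖ ‖uⱼ - uₖ‖²`. The variance decomposition of each row of `R`,
summed against `φ` and combined with `φᵀR = φᵀ`, gives the identity
`‖Ru - 𝟏aᵀ‖²_φ = ‖u - 𝟏aᵀ‖²_φ - D(u)`, so it suffices to bound `‖u - 𝟏(φᵀu)‖²_φ` by a multiple
of `D(u)`. The single term `j = a, k = b` of `D(u)` shows `φₐ Rₐₐ Rₐᵦ ‖uₐ - uᵦ‖² ≤ 2 D(u)`: thanks
to the positive diagonal every edge `a → b` of `R` has increment at most `√(2D(u)/ε)`, where `ε`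
is the least value of `φₐ Rₐₐ Rₐᵦ` over edges. Irreducibility joins any two indices by a path of
at most `K` edges, so `‖uᵢ - uⱼ‖² ≤ 2K² D(u)/ε`, and averaging over `i, j` with weights `φ`
bounds `‖u - 𝟏(φᵀu)‖²_φ = ½ ∑ⱼₖ φⱼ φₖ ‖uⱼ - uₖ‖²` by `K² D(u)/ε`.
-/

open Finset

section Spread

variable {ι E : Type*} [Fintype ι] [NormedAddCommGroup E]

def pairSpread (r : ι → ℝ) (w : ι → E) : ℝ :=
  ∑ j, ∑ k, r j * r k * ‖w j - w k‖ ^ 2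

lemma pairSpread_nonneg {r : ι → ℝ} (hr : ∀ j, 0 ≤ r j) (w : ι → E) : 0 ≤ pairSpread r w :=
  sum_nonneg fun j _ => sum_nonneg fun k _ => by have := hr j; have := hr k; positivity

lemma mul_norm_sub_sq_le_pairSpread {r : ι → ℝ} (hr : ∀ j, 0 ≤ r j) (w : ι → E) (j k : ι) :
    r j * r k * ‖w j - w k‖ ^ 2 ≤ pairSpread r w := by
  have hterm : ∀ j k, 0 ≤ r j * r k * ‖w j - w k‖ ^ 2 := fun j k => by
    have := hr j; have := hr k; positivity
  calc r j * r k * ‖w j - w k‖ ^ 2 ≤ ∑ k, r j * r k * ‖w j - w k‖ ^ 2 :=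
        single_le_sum (fun k _ => hterm j k) (mem_univ k)
    _ ≤ pairSpread r w :=
        single_le_sum (f := fun j => ∑ k, r j * r k * ‖w j - w k‖ ^ 2)
          (fun j _ => sum_nonneg fun k _ => hterm j k) (mem_univ j)

lemma pairSpread_le {r : ι → ℝ} (hr : ∀ j, 0 ≤ r j) (hr1 : ∑ j, r j = 1) {w : ι → E} {B : ℝ}
    (hB : ∀ j k, ‖w j - w k‖ ^ 2 ≤ B) : pairSpread r w ≤ B :=
  calc pairSpread r w ≤ ∑ j, ∑ k, r j * r k * B :=
        sum_le_sum fun j _ => sum_le_sum fun k _ =>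
          mul_le_mul_of_nonneg_left (hB j k) (mul_nonneg (hr j) (hr k))
    _ = B := by simp only [← sum_mul, ← mul_sum, hr1, one_mul]

lemma sum_mul_norm_sub_sq_eq [InnerProductSpace ℝ E] {r : ι → ℝ} (hr1 : ∑ j, r j = 1)
    (w : ι → E) (a : E) :
    ∑ j, r j * ‖w j - a‖ ^ 2 = ‖∑ j, r j • w j - a‖ ^ 2 + pairSpread r w / 2 := by
  set v : ι → E := fun j => w j - a
  have hmean : ∑ j, r j • w j - a = ∑ j, r j • v j := by
    simp only [v, smul_sub, sum_sub_distrib, ← sum_smul, hr1, one_smul]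
  have hnorm : ‖∑ j, r j • v j‖ ^ 2 = ∑ j, ∑ k, r j * r k * inner ℝ (v j) (v k) := by
    simp only [← real_inner_self_eq_norm_sq, sum_inner, inner_sum, real_inner_smul_left,
      real_inner_smul_right]
    exact sum_congr rfl fun j _ => sum_congr rfl fun k _ => by rw [real_inner_comm]; ring
  have hspread : pairSpread r w = 2 * ∑ j, r j * ‖v j‖ ^ 2 -
      2 * ∑ j, ∑ k, r j * r k * inner ℝ (v j) (v k) := by
    have hpair : ∀ j k, r j * r k * ‖w j - w k‖ ^ 2 = r j * ‖v j‖ ^ 2 * r k +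
        r j * (r k * ‖v k‖ ^ 2) - 2 * (r j * r k * inner ℝ (v j) (v k)) := fun j k => by
      rw [show w j - w k = v j - v k by simp [v], norm_sub_sq_real]; ring
    simp only [pairSpread, hpair, sum_sub_distrib, sum_add_distrib, ← sum_mul, ← mul_sum, hr1]
    ring
  rw [hmean, hnorm, hspread]
  ring

end Spread

lemma exists_pos_forall_le_of_finite {α : Type*} [Finite α] {f : α → ℝ} (hf : ∀ x, 0 < f x) :
    ∃ ε > 0, ∀ x, ε ≤ f x := by
  cases isEmpty_or_nonempty α
  · exact ⟨1, one_pos, isEmptyElim⟩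
  · obtain ⟨x₀, hx₀⟩ := Finite.exists_min f
    exact ⟨f x₀, hf x₀, hx₀⟩

section StochasticMatrix

variable {ι E : Type*} [Fintype ι] [NormedAddCommGroup E] {R : Matrix ι ι ℝ} {φ : ι → ℝ}

lemma sum_mul_sum_mul_eq_of_vecMul_eq (hφ : Matrix.vecMul φ R = φ) (f : ι → ℝ) :
    ∑ i, φ i * ∑ j, R i j * f j = ∑ j, φ j * f j := by
  simpa only [dotProduct, Matrix.mulVec, hφ] using Matrix.dotProduct_mulVec φ R f

lemma sum_mul_norm_sum_smul_sub_sq_eq [InnerProductSpace ℝ E] (hRrow : ∀ i, ∑ j, R i j = 1)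
    (hφ : Matrix.vecMul φ R = φ) (u : ι → E) (a : E) :
    ∑ i, φ i * ‖∑ j, R i j • u j - a‖ ^ 2 =
      ∑ i, φ i * ‖u i - a‖ ^ 2 - (∑ i, φ i * pairSpread (R i) u) / 2 := by
  have hrow : ∀ i, ‖∑ j, R i j • u j - a‖ ^ 2 =
      ∑ j, R i j * ‖u j - a‖ ^ 2 - pairSpread (R i) u / 2 := fun i => by
    rw [sum_mul_norm_sub_sq_eq (hRrow i)]; ring
  simp only [hrow, mul_sub, sum_sub_distrib, sum_mul_sum_mul_eq_of_vecMul_eq hφ, sum_div,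
    mul_div_assoc]

/-- Along a path of positive entries of `R`, the increments of `u` add up. -/
lemma norm_sub_le_mul_of_pow_pos [DecidableEq ι] (hR : ∀ i j, 0 ≤ R i j) {u : ι → E} {s : ℝ}
    (hs : ∀ a b, 0 < R a b → ‖u a - u b‖ ≤ s) (k : ℕ) (i j : ι) (hk : 0 < (R ^ k) i j) :
    ‖u i - u j‖ ≤ k * s := by
  induction k generalizing j with
  | zero =>
    obtain rfl : i = j := by
      by_contra hij
      simp [Matrix.one_apply_ne hij] at hk
    simp
  | succ k ih =>
    rw [pow_succ, Matrix.mul_apply] at hk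
    obtain ⟨l, -, hl⟩ := exists_lt_of_sum_lt (f := fun _ => (0 : ℝ)) (by simpa using hk)
    have hlj : 0 < R l j := lt_of_le_of_ne (hR l j) fun h => by simp [← h] at hl
    calc ‖u i - u j‖ ≤ ‖u i - u l‖ + ‖u l - u j‖ := norm_sub_le_norm_sub_add_norm_sub _ _ _
      _ ≤ k * s + s := add_le_add (ih l (pos_of_mul_pos_left hl hlj.le)) (hs l j hlj)
      _ = (k + 1 : ℕ) * s := by push_cast; ring

lemma mul_pairSpread_le [DecidableEq ι] (hR : ∀ i j, 0 ≤ R i j) (hφ0 : ∀ i, 0 ≤ φ i)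
    (hφ1 : ∑ i, φ i = 1) {ε : ℝ} (hε : 0 < ε)
    (hεle : ∀ a b, 0 < R a b → ε ≤ φ a * (R a a * R a b)) {K : ℕ}
    (hK : ∀ i j, ∃ k ≤ K, 0 < (R ^ k) i j) (u : ι → E) :
    ε * pairSpread φ u ≤ K ^ 2 * ∑ i, φ i * pairSpread (R i) u := by
  set D := ∑ i, φ i * pairSpread (R i) u
  have hterm : ∀ i, 0 ≤ φ i * pairSpread (R i) u := fun i =>
    mul_nonneg (hφ0 i) (pairSpread_nonneg (hR i) u)
  have hD : 0 ≤ D := sum_nonneg fun i _ => hterm i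
  have hedge : ∀ a b, 0 < R a b → ‖u a - u b‖ ≤ √(D / ε) := by
    intro a b hab
    rw [← abs_norm]
    refine Real.abs_le_sqrt ((le_div_iff₀ hε).2 ?_)
    calc ‖u a - u b‖ ^ 2 * ε ≤ φ a * (R a a * R a b * ‖u a - u b‖ ^ 2) := by
          nlinarith [mul_le_mul_of_nonneg_left (hεle a b hab) (sq_nonneg ‖u a - u b‖)]
      _ ≤ φ a * pairSpread (R a) u :=
          mul_le_mul_of_nonneg_left (mul_norm_sub_sq_le_pairSpread (hR a) u a b) (hφ0 a)
      _ ≤ D := single_le_sum (fun i _ => hterm i) (mem_univ a)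
  have hpair : ∀ i j, ‖u i - u j‖ ^ 2 ≤ K ^ 2 * (D / ε) := by
    intro i j
    obtain ⟨k, hkK, hk⟩ := hK i j
    have hpath : ‖u i - u j‖ ≤ K * √(D / ε) :=
      (norm_sub_le_mul_of_pow_pos hR hedge k i j hk).trans
        (mul_le_mul_of_nonneg_right (Nat.cast_le.2 hkK) (Real.sqrt_nonneg _))
    calc ‖u i - u j‖ ^ 2 ≤ (K * √(D / ε)) ^ 2 := pow_le_pow_left₀ (norm_nonneg _) hpath 2
      _ = K ^ 2 * (D / ε) := by rw [mul_pow, Real.sq_sqrt (div_nonneg hD hε.le)]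
  have hspread := pairSpread_le hφ0 hφ1 hpair
  rw [← mul_div_assoc, le_div_iff₀ hε] at hspread
  linarith

universe u in
lemma exists_pos_mul_pairSpread_le [DecidableEq ι] (hR : ∀ i j, 0 ≤ R i j)
    (hRdiag : ∀ i, 0 < R i i) (hRirr : ∀ i j, ∃ k : ℕ, 0 < (R ^ k) i j) (hφpos : ∀ i, 0 < φ i)
    (hφ1 : ∑ i, φ i = 1) :
    ∃ γ > 0, ∀ (F : Type u) [NormedAddCommGroup F] (v : ι → F),
      γ * pairSpread φ v ≤ ∑ i, φ i * pairSpread (R i) v := by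
  obtain ⟨ε, hε, hεle⟩ := exists_pos_forall_le_of_finite
    (f := fun e : {q : ι × ι // 0 < R q.1 q.2} => φ e.1.1 * (R e.1.1 e.1.1 * R e.1.1 e.1.2))
    fun e => mul_pos (hφpos _) (mul_pos (hRdiag _) e.2)
  choose k hk using hRirr
  obtain ⟨K, hK⟩ := Finite.exists_le fun q : ι × ι => k q.1 q.2
  refine ⟨ε / ((K + 1 : ℕ) : ℝ) ^ 2, by positivity, fun F _ v => ?_⟩
  rw [div_mul_eq_mul_div, div_le_iff₀ (by positivity), mul_comm _ (_ ^ 2)]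
  exact mul_pairSpread_le hR (fun i => (hφpos i).le) hφ1 hε (fun a b hab => hεle ⟨(a, b), hab⟩)
    (fun i j => ⟨k i j, (hK (i, j)).trans K.le_succ, hk i j⟩) v

end StochasticMatrix

/-- Strict contraction of a row-stochastic, irreducible matrix with
positive diagonal in the `φ`-weighted norm: there is `c ∈ (0,1)` (depending only on
`R`) such that for all `p ≥ 1`, `u ∈ ℝ^{n×p}` and `a ∈ ℝ^p`,
`‖Ru − 𝟏aᵀ‖_φ² ≤ ‖u − 𝟏aᵀ‖_φ² − c² ‖u − 𝟏(φᵀu)‖_φ²`; in particular, with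
`a = φᵀu`, `‖Ru − 𝟏(φᵀu)‖_φ ≤ √(1−c²) ‖u − 𝟏(φᵀu)‖_φ` with `√(1−c²) ∈ (0,1)`. -/
theorem row_stochastic_contraction
    (n : ℕ)
    (R : Matrix (Fin n) (Fin n) ℝ)
    (hRnonneg : ∀ i j, 0 ≤ R i j)
    (hRrow : ∀ i, ∑ j, R i j = 1)
    (hRdiag : ∀ i, 0 < R i i)
    (hRirr : ∀ i j, ∃ k : ℕ, 1 ≤ k ∧ 0 < (R ^ k) i j)
    (φ : Fin n → ℝ)
    (hφpos : ∀ i, 0 < φ i)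
    (hφ : Matrix.vecMul φ R = φ)
    (hφsum : ∑ i, φ i = 1) :
    ∃ c : ℝ, 0 < c ∧ c < 1 ∧
      (∀ p : ℕ, 1 ≤ p → ∀ (u : Fin n → EuclideanSpace ℝ (Fin p)) (a : EuclideanSpace ℝ (Fin p)),
        ∑ i, φ i * ‖(∑ j, R i j • u j) - a‖ ^ 2
          ≤ (∑ i, φ i * ‖u i - a‖ ^ 2)
            - c ^ 2 * ∑ i, φ i * ‖u i - (∑ j, φ j • u j)‖ ^ 2) ∧
      0 < Real.sqrt (1 - c ^ 2) ∧ Real.sqrt (1 - c ^ 2) < 1 ∧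
      (∀ p : ℕ, 1 ≤ p → ∀ u : Fin n → EuclideanSpace ℝ (Fin p),
        Real.sqrt (∑ i, φ i * ‖(∑ j, R i j • u j) - (∑ j, φ j • u j)‖ ^ 2)
          ≤ Real.sqrt (1 - c ^ 2) *
            Real.sqrt (∑ i, φ i * ‖u i - (∑ j, φ j • u j)‖ ^ 2)) := by
  obtain ⟨γ, hγ, hγP⟩ := exists_pos_mul_pairSpread_le hRnonneg hRdiag
    (fun i j => (hRirr i j).imp fun _ => And.right) hφpos hφsum
  obtain ⟨c, hc0, hc1, hcγ⟩ : ∃ c : ℝ, 0 < c ∧ c < 1 ∧ c ^ 2 ≤ γ :=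
    ⟨min √γ (1 / 2), by positivity, (min_le_right _ _).trans_lt (by norm_num),
      (pow_le_pow_left₀ (by positivity) (min_le_left _ _) 2).trans (Real.sq_sqrt hγ.le).le⟩
  have hmain : ∀ p (u : Fin n → EuclideanSpace ℝ (Fin p)) a,
      ∑ i, φ i * ‖(∑ j, R i j • u j) - a‖ ^ 2
        ≤ (∑ i, φ i * ‖u i - a‖ ^ 2) - c ^ 2 * ∑ i, φ i * ‖u i - (∑ j, φ j • u j)‖ ^ 2 := by
    intro p u a
    have hvar : ∑ i, φ i * ‖u i - ∑ j, φ j • u j‖ ^ 2 = pairSpread φ u / 2 := by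
      rw [sum_mul_norm_sub_sq_eq hφsum, sub_self, norm_zero]; ring
    rw [sum_mul_norm_sum_smul_sub_sq_eq hRrow hφ, hvar]
    have hP := pairSpread_nonneg (fun i => (hφpos i).le) u
    nlinarith [hγP _ u, mul_le_mul_of_nonneg_right hcγ hP]
  have hc2 : 0 < 1 - c ^ 2 := by nlinarith
  refine ⟨c, hc0, hc1, fun p _ => hmain p, Real.sqrt_pos.2 hc2,
    (Real.sqrt_lt' one_pos).2 (by nlinarith), fun p _ u => ?_⟩
  rw [← Real.sqrt_mul hc2.le]
  exact Real.sqrt_le_sqrt (by linarith [hmain p u (∑ j, φ j • u j)])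
end

section
/- The spectral radius of M is strictly less than λ*, i.e., every complex eigenvalue λ of M satisfies |λ| < λ*, if and only if det(λ*·I − M) > 0. -/
/-!
If some eigenpair `(z, v)` of `M` has `‖z‖ ≥ λ`, the triangle inequality makes `u = |v|` a nonzero
nonnegative vector with `(λ I - M) u ≤ 0`. The matrix `A = λ I - M` has nonpositive off-diagonal
and nonnegative diagonal entries. In dimension 3 this makes the off-diagonal cofactors of `A`
nonnegative, and when `det A > 0` the Laplace expansion along a row forces the diagonal cofactors
to be nonnegative too. Then `det A • u = adj A (A u) ≤ 0`, so `det A ≤ 0`. Conversely, if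
`det A ≤ 0`, the monic characteristic polynomial of `M` has a real root `ρ ≥ λ`, a real
eigenvalue of modulus at least `λ`.
-/

open Polynomial Matrix

theorem Polynomial.Monic.exists_isRoot_ge_of_eval_nonpos {p : ℝ[X]} (hp : p.Monic) {a : ℝ}
    (ha : p.eval a ≤ 0) : ∃ r, a ≤ r ∧ p.IsRoot r := by
  have hdeg : 0 < p.degree := by
    by_contra! h
    rw [hp.degree_le_zero_iff_eq_one.mp h, eval_one] at ha
    exact one_pos.not_ge ha
  have hlarge := (tendsto_atTop_of_leadingCoeff_nonneg p hdeg
    (by simp [hp.leadingCoeff])).eventually (Filter.eventually_ge_atTop 0)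
  obtain ⟨b, hb, hab⟩ := (hlarge.and (Filter.eventually_ge_atTop a)).exists
  obtain ⟨r, hr, hroot⟩ := intermediate_value_Icc hab p.continuous.continuousOn ⟨ha, hb⟩
  exact ⟨r, hr.1, hroot⟩

namespace Matrix

variable {n : Type*} [Fintype n] [DecidableEq n]

theorem exists_eigenvector_ge_of_det_nonpos (M : Matrix n n ℝ) {lam : ℝ}
    (h : (lam • (1 : Matrix n n ℝ) - M).det ≤ 0) :
    ∃ ρ : ℝ, lam ≤ ρ ∧ ∃ v : n → ℝ, v ≠ 0 ∧ M *ᵥ v = ρ • v := by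
  have heval (t : ℝ) : M.charpoly.eval t = (t • (1 : Matrix n n ℝ) - M).det := by
    rw [eval_charpoly, scalar_apply, smul_one_eq_diagonal]
  rw [← heval] at h
  obtain ⟨ρ, hlam, hroot⟩ := M.charpoly_monic.exists_isRoot_ge_of_eval_nonpos h
  rw [IsRoot, heval, ← exists_mulVec_eq_zero_iff] at hroot
  obtain ⟨v, hv, hMv⟩ := hroot
  refine ⟨ρ, hlam, v, hv, ?_⟩
  rwa [sub_mulVec, smul_mulVec, one_mulVec, sub_eq_zero, eq_comm] at hMv

omit [DecidableEq n] in
theorem map_ofReal_mulVec_of_mulVec_eq_smul {M : Matrix n n ℝ} {ρ : ℝ} {v : n → ℝ}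
    (h : M *ᵥ v = ρ • v) :
    M.map Complex.ofReal *ᵥ (Complex.ofReal ∘ v) = (ρ : ℂ) • (Complex.ofReal ∘ v) := by
  ext i
  exact (RingHom.map_mulVec Complex.ofRealHom M v i).symm.trans (by simp [h])

omit [DecidableEq n] in
theorem norm_smul_le_mulVec_norm {M : Matrix n n ℝ} (hM : ∀ i j, 0 ≤ M i j) {z : ℂ} {v : n → ℂ}
    (h : M.map Complex.ofReal *ᵥ v = z • v) (i : n) :
    ‖z‖ * ‖v i‖ ≤ (M *ᵥ fun j => ‖v j‖) i := by
  calc ‖z‖ * ‖v i‖ = ‖∑ j, (M i j : ℂ) * v j‖ := by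
        rw [← norm_mul, ← smul_eq_mul, ← Pi.smul_apply, ← h]; rfl
    _ ≤ ∑ j, ‖(M i j : ℂ) * v j‖ := norm_sum_le _ _
    _ = (M *ᵥ fun j => ‖v j‖) i := by
        simp [mulVec, dotProduct, Complex.norm_real, abs_of_nonneg (hM i _)]

theorem det_nonpos_of_adjugate_nonneg {R : Type*} [CommRing R] [LinearOrder R]
    [IsStrictOrderedRing R]
    {A : Matrix n n R} (hadj : ∀ i j, 0 ≤ A.adjugate i j) {u : n → R} (hu : 0 ≤ u) (hu0 : u ≠ 0)
    (hAu : A *ᵥ u ≤ 0) : A.det ≤ 0 := by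
  obtain ⟨i, hi⟩ := Function.ne_iff.mp hu0
  have hui : 0 < u i := (hu i).lt_of_ne' hi
  have hdet : A.det * u i = (A.adjugate *ᵥ (A *ᵥ u)) i := by
    rw [mulVec_mulVec, adjugate_mul, smul_mulVec, one_mulVec, Pi.smul_apply, smul_eq_mul]
  have hsum : (A.adjugate *ᵥ (A *ᵥ u)) i ≤ 0 :=
    Finset.sum_nonpos fun j _ => mul_nonpos_of_nonneg_of_nonpos (hadj i j) (hAu j)
  exact nonpos_of_mul_nonpos_left (hdet ▸ hsum) hui

theorem adjugate_nonneg_of_det_pos {R : Type*} [CommRing R] [LinearOrder R]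
    [IsStrictOrderedRing R] {A : Matrix n n R} (hoff : ∀ i j, i ≠ j → A i j ≤ 0)
    (hdiag : ∀ i, 0 ≤ A i i) (hadj : ∀ i j, i ≠ j → 0 ≤ A.adjugate i j) (hdet : 0 < A.det)
    (i j : n) : 0 ≤ A.adjugate i j := by
  obtain hij | rfl := ne_or_eq i j
  · exact hadj i j hij
  have hexpand :
      A.det = A i i * A.adjugate i i + ∑ k ∈ Finset.univ.erase i, A i k * A.adjugate k i := by
    rw [Finset.add_sum_erase _ (fun k => A i k * A.adjugate k i) (Finset.mem_univ i), ← mul_apply,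
      mul_adjugate, smul_apply, one_apply_eq, smul_eq_mul, mul_one]
  have hrest : ∑ k ∈ Finset.univ.erase i, A i k * A.adjugate k i ≤ 0 :=
    Finset.sum_nonpos fun k hk => mul_nonpos_of_nonpos_of_nonneg
      (hoff i k (Finset.ne_of_mem_erase hk).symm) (hadj k i (Finset.ne_of_mem_erase hk))
  by_contra! hneg
  linarith [mul_nonpos_of_nonneg_of_nonpos (hdiag i) hneg.le]

theorem adjugate_fin_three_nonneg_of_ne {R : Type*} [CommRing R] [LinearOrder R]
    [IsStrictOrderedRing R] {A : Matrix (Fin 3) (Fin 3) R} (hoff : ∀ i j, i ≠ j → A i j ≤ 0)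
    (hdiag : ∀ i, 0 ≤ A i i) (i j : Fin 3) (hij : i ≠ j) : 0 ≤ A.adjugate i j := by
  have := hoff 0 1 (by decide); have := hoff 0 2 (by decide); have := hoff 1 0 (by decide)
  have := hoff 1 2 (by decide); have := hoff 2 0 (by decide); have := hoff 2 1 (by decide)
  have := hdiag 0; have := hdiag 1; have := hdiag 2
  fin_cases i <;> fin_cases j <;> simp at hij <;> simp [adjugate_fin_three] <;> nlinarith

end Matrix

theorem spectral_radius_lt_iff_det_pos_general
    (M : Matrix (Fin 3) (Fin 3) ℝ)
    (hMnonneg : ∀ i j, 0 ≤ M i j)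
    (lam : ℝ)
    (hdiag : ∀ i, M i i < lam) :
    (∀ (z : ℂ) (v : Fin 3 → ℂ), v ≠ 0 →
        (M.map (Complex.ofReal)).mulVec v = z • v → ‖z‖ < lam) ↔
    0 < (lam • (1 : Matrix (Fin 3) (Fin 3) ℝ) - M).det := by
  constructor
  · intro h
    by_contra! hdet
    obtain ⟨ρ, hlam, v, hv, hMv⟩ := M.exists_eigenvector_ge_of_det_nonpos hdet
    have hρ := h ρ _ (fun h0 => hv (funext fun j => Complex.ofReal_eq_zero.mp (congrFun h0 j)))
      (map_ofReal_mulVec_of_mulVec_eq_smul hMv)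
    rw [Complex.norm_real, Real.norm_eq_abs] at hρ
    linarith [le_abs_self ρ]
  · intro hdet z v hv hzv
    by_contra! hz
    set A := lam • (1 : Matrix (Fin 3) (Fin 3) ℝ) - M
    have hoff (i j) (hij : i ≠ j) : A i j ≤ 0 := by simp [A, one_apply_ne hij, hMnonneg]
    have hdiagA (i) : 0 ≤ A i i := by simpa [A] using (hdiag i).le
    have hAu : A *ᵥ (fun j => ‖v j‖) ≤ 0 := fun i => by
      have := norm_smul_le_mulVec_norm hMnonneg hzv i
      simp only [A, sub_mulVec, smul_mulVec, one_mulVec, Pi.sub_apply, Pi.smul_apply, smul_eq_mul,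
        Pi.zero_apply]
      linarith [mul_le_mul_of_nonneg_right hz (norm_nonneg (v i))]
    have hadj := adjugate_nonneg_of_det_pos hoff hdiagA
      (adjugate_fin_three_nonneg_of_ne hoff hdiagA) hdet
    exact (det_nonpos_of_adjugate_nonneg hadj (fun j => norm_nonneg (v j))
      (fun h0 => hv (funext fun j => norm_eq_zero.mp (congrFun h0 j))) hAu).not_gt hdet

/-- For a nonnegative irreducible `3×3` matrix `M` and `λ* > 0` with
`M_{ii} < λ*` for all `i`, the spectral radius of `M` is strictly less than `λ*`
(i.e. every complex eigenvalue `λ` of `M` satisfies `|λ| < λ*`) if and only if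
`det(λ* I − M) > 0`. -/
theorem spectral_radius_lt_iff_det_pos
    (M : Matrix (Fin 3) (Fin 3) ℝ)
    (hMnonneg : ∀ i j, 0 ≤ M i j)
    (hMirr : ∀ i j, ∃ k : ℕ, 1 ≤ k ∧ 0 < (M ^ k) i j)
    (lam : ℝ) (hlam : 0 < lam)
    (hdiag : ∀ i, M i i < lam) :
    (∀ (z : ℂ) (v : Fin 3 → ℂ), v ≠ 0 →
        (M.map (Complex.ofReal)).mulVec v = z • v → ‖z‖ < lam) ↔
    0 < (lam • (1 : Matrix (Fin 3) (Fin 3) ℝ) - M).det :=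
  spectral_radius_lt_iff_det_pos_general M hMnonneg lam hdiag
end
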